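/- Let Ω = [0,L] with L > 0 and let φ : Ω → ℝ be twice continuously differentiable and L-periodic (so that φ(0)=φ(L) and φ'(0)=φ'(L)). Then ‖φ'‖²_{L²} ≤ L·‖φ''‖²_{L¹} + (4/L)·‖φ‖_{L¹}·‖φ''‖_{L¹}. -/

import Mathlib

/-!
Integrating by parts, the periodic boundary terms cancel and
`‖φ'‖₂² = -∫ φ φ'' ≤ ‖φ‖∞ ‖φ''‖₁`. Averaging `|φ x| ≤ |φ y| + ‖φ'‖₁` over `y` gives
`‖φ‖∞ ≤ ‖φ‖₁ / L + ‖φ'‖₁`, and the pointwise AM-GM inequality `2 A |φ'| ≤ φ'² + A²` with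
`A = ‖φ''‖₁` absorbs `‖φ'‖₁ ‖φ''‖₁` into half of `‖φ'‖₂²`. This yields the bound even with
`2 / L` in place of `4 / L`.
-/

open MeasureTheory Set intervalIntegral

section

variable {a b : ℝ} {f f' f'' : ℝ → ℝ}

theorem integral_eq_sub_of_hasDerivWithinAt_Icc
    (hf : ∀ x ∈ Icc a b, HasDerivWithinAt f (f' x) (Icc a b) x)
    (hf' : IntervalIntegrable f' volume a b) {x y : ℝ} (hx : x ∈ Icc a b) (hy : y ∈ Icc a b) :
    ∫ t in y..x, f' t = f x - f y := by
  have hsub : uIcc y x ⊆ Icc a b := uIcc_subset_Icc hy hx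
  refine integral_eq_sub_of_hasDeriv_right
    (fun t ht => (hf t (hsub ht)).continuousWithinAt.mono hsub) (fun t ht => ?_)
    (hf'.mono_set (by rwa [uIcc_of_le (hy.1.trans hy.2)]))
  have ht : t ∈ Ioo a b := Ioo_subset_Ioo (le_min hy.1 hx.1) (max_le hy.2 hx.2) ht
  exact ((hf t (Ioo_subset_Icc_self ht)).hasDerivAt (Icc_mem_nhds ht.1 ht.2)).hasDerivWithinAt

theorem abs_sub_le_integral_abs_deriv
    (hf : ∀ x ∈ Icc a b, HasDerivWithinAt f (f' x) (Icc a b) x)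
    (hf' : IntervalIntegrable f' volume a b) {x y : ℝ} (hx : x ∈ Icc a b) (hy : y ∈ Icc a b) :
    |f x - f y| ≤ ∫ t in a..b, |f' t| := by
  have hab : a ≤ b := hx.1.trans hx.2
  calc |f x - f y| = ‖∫ t in y..x, f' t‖ := by
        rw [integral_eq_sub_of_hasDerivWithinAt_Icc hf hf' hx hy, Real.norm_eq_abs]
    _ ≤ |(∫ t in y..x, |f' t|)| := norm_integral_le_abs_integral_norm
    _ ≤ |(∫ t in a..b, |f' t|)| :=
        abs_integral_mono_interval
          (uIoc_subset_uIoc_of_uIcc_subset_uIcc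
            (by rw [uIcc_of_le hab]; exact uIcc_subset_Icc hy hx))
          (Filter.Eventually.of_forall fun t => abs_nonneg (f' t)) hf'.abs
    _ = ∫ t in a..b, |f' t| := abs_of_nonneg (integral_nonneg hab fun t _ => abs_nonneg _)

theorem abs_le_integral_abs_div_add_integral_abs_deriv (hab : a < b)
    (hf : ∀ x ∈ Icc a b, HasDerivWithinAt f (f' x) (Icc a b) x)
    (hf' : IntervalIntegrable f' volume a b) {x : ℝ} (hx : x ∈ Icc a b) :
    |f x| ≤ (∫ t in a..b, |f t|) / (b - a) + ∫ t in a..b, |f' t| := by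
  have hfi : IntervalIntegrable (fun t => |f t|) volume a b :=
    (ContinuousOn.intervalIntegrable_of_Icc hab.le
      fun t ht => (hf t ht).continuousWithinAt).abs
  rw [div_add' _ _ _ (sub_pos.2 hab).ne', le_div_iff₀ (sub_pos.2 hab)]
  calc |f x| * (b - a) = ∫ _ in a..b, |f x| := by
        rw [intervalIntegral.integral_const, smul_eq_mul, mul_comm]
    _ ≤ ∫ y in a..b, (|f y| + ∫ t in a..b, |f' t|) :=
        integral_mono_on hab.le intervalIntegrable_const (hfi.add intervalIntegrable_const)
          fun y hy => by
            have := abs_sub_le_integral_abs_deriv hf hf' hx hy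
            linarith [abs_sub_abs_le_abs_sub (f x) (f y)]
    _ = (∫ t in a..b, |f t|) + (∫ t in a..b, |f' t|) * (b - a) := by
        rw [integral_add hfi intervalIntegrable_const, intervalIntegral.integral_const,
          smul_eq_mul, mul_comm]

theorem integral_deriv_sq_eq_neg_integral_mul_deriv2 (hab : a ≤ b)
    (hf : ∀ x ∈ Icc a b, HasDerivWithinAt f (f' x) (Icc a b) x)
    (hf' : ∀ x ∈ Icc a b, HasDerivWithinAt f' (f'' x) (Icc a b) x)
    (hf'' : IntervalIntegrable f'' volume a b) (hfab : f a = f b) (hf'ab : f' a = f' b) :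
    ∫ x in a..b, f' x ^ 2 = -∫ x in a..b, f x * f'' x := by
  rw [← uIcc_of_le hab] at hf hf'
  have hf'i : IntervalIntegrable f' volume a b :=
    ContinuousOn.intervalIntegrable fun x hx => (hf' x hx).continuousWithinAt
  rw [integral_mul_deriv_eq_deriv_mul_of_hasDerivWithinAt hf hf' hf'i hf'', hfab, hf'ab]
  simp only [sub_self, zero_sub, neg_neg, sq]

theorem integral_deriv_sq_le_mul_integral_abs_deriv2 (hab : a ≤ b)
    (hf : ∀ x ∈ Icc a b, HasDerivWithinAt f (f' x) (Icc a b) x)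
    (hf' : ∀ x ∈ Icc a b, HasDerivWithinAt f' (f'' x) (Icc a b) x)
    (hf'' : IntervalIntegrable f'' volume a b) (hfab : f a = f b) (hf'ab : f' a = f' b)
    {M : ℝ} (hM : ∀ x ∈ Icc a b, |f x| ≤ M) :
    ∫ x in a..b, f' x ^ 2 ≤ M * ∫ x in a..b, |f'' x| := by
  have hff'' : IntervalIntegrable (fun x => f x * f'' x) volume a b :=
    hf''.continuousOn_mul (by rw [uIcc_of_le hab]; exact fun x hx => (hf x hx).continuousWithinAt)
  rw [integral_deriv_sq_eq_neg_integral_mul_deriv2 hab hf hf' hf'' hfab hf'ab,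
    ← intervalIntegral.integral_const_mul]
  calc -∫ x in a..b, f x * f'' x ≤ |∫ x in a..b, f x * f'' x| := neg_le_abs _
    _ ≤ ∫ x in a..b, |f x * f'' x| := abs_integral_le_integral_abs hab
    _ ≤ ∫ x in a..b, M * |f'' x| :=
        integral_mono_on hab hff''.abs (hf''.abs.const_mul M) fun x hx => by
          rw [abs_mul]; exact mul_le_mul_of_nonneg_right (hM x hx) (abs_nonneg _)

theorem two_mul_mul_integral_abs_le {g : ℝ → ℝ} (hab : a ≤ b)
    (hg : IntervalIntegrable g volume a b) (hg2 : IntervalIntegrable (fun x => g x ^ 2) volume a b)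
    (c : ℝ) :
    2 * c * ∫ x in a..b, |g x| ≤ (∫ x in a..b, g x ^ 2) + (b - a) * c ^ 2 := by
  have hconst : (b - a) * c ^ 2 = ∫ _ in a..b, c ^ 2 := by
    rw [intervalIntegral.integral_const, smul_eq_mul]
  rw [← intervalIntegral.integral_const_mul, hconst,
    ← integral_add hg2 intervalIntegrable_const]
  exact integral_mono_on hab (hg.abs.const_mul _) (hg2.add intervalIntegrable_const) fun x _ => by
    nlinarith [sq_nonneg (|g x| - c), sq_abs (g x)]

end

theorem deriv_L2_interpolation_bound (L : ℝ) (hL : 0 < L) (φ : ℝ → ℝ)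
    (hφ : ContDiffOn ℝ 2 φ (Icc 0 L))
    (hper : φ 0 = φ L)
    (hper' : derivWithin φ (Icc 0 L) 0 = derivWithin φ (Icc 0 L) L) :
    (∫ x in (0:ℝ)..L, (derivWithin φ (Icc 0 L) x) ^ 2)
      ≤ L * (∫ x in (0:ℝ)..L, |derivWithin (derivWithin φ (Icc 0 L)) (Icc 0 L) x|) ^ 2
        + (4 / L) * (∫ x in (0:ℝ)..L, |φ x|)
            * (∫ x in (0:ℝ)..L, |derivWithin (derivWithin φ (Icc 0 L)) (Icc 0 L) x|) := by
  set ψ := derivWithin φ (Icc 0 L)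
  have hI : UniqueDiffOn ℝ (Icc 0 L) := uniqueDiffOn_Icc hL
  have hψ : ContDiffOn ℝ 1 ψ (Icc 0 L) := hφ.derivWithin hI (by norm_num)
  have hφd : ∀ x ∈ Icc 0 L, HasDerivWithinAt φ (ψ x) (Icc 0 L) x := fun x hx =>
    (hφ.differentiableOn two_ne_zero x hx).hasDerivWithinAt
  have hψd : ∀ x ∈ Icc 0 L, HasDerivWithinAt ψ (derivWithin ψ (Icc 0 L) x) (Icc 0 L) x :=
    fun x hx => (hψ.differentiableOn one_ne_zero x hx).hasDerivWithinAt
  have hψi : IntervalIntegrable ψ volume 0 L := hψ.continuousOn.intervalIntegrable_of_Icc hL.le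
  have hψ'i : IntervalIntegrable (derivWithin ψ (Icc 0 L)) volume 0 L :=
    (hψ.continuousOn_derivWithin hI le_rfl).intervalIntegrable_of_Icc hL.le
  set A := ∫ x in (0:ℝ)..L, |derivWithin ψ (Icc 0 L) x|
  set B := ∫ x in (0:ℝ)..L, |φ x|
  set C := ∫ x in (0:ℝ)..L, |ψ x|
  have hsup : ∀ x ∈ Icc 0 L, |φ x| ≤ B / L + C := fun x hx => by
    simpa only [sub_zero] using abs_le_integral_abs_div_add_integral_abs_deriv hL hφd hψi hx
  have hX : ∫ x in (0:ℝ)..L, ψ x ^ 2 ≤ (B / L + C) * A :=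
    integral_deriv_sq_le_mul_integral_abs_deriv2 hL.le hφd hψd hψ'i hper hper' hsup
  have hAMGM : 2 * A * C ≤ (∫ x in (0:ℝ)..L, ψ x ^ 2) + L * A ^ 2 := by
    simpa only [sub_zero] using two_mul_mul_integral_abs_le hL.le hψi
      ((hψ.continuousOn.pow 2).intervalIntegrable_of_Icc hL.le) A
  have hBA : 0 ≤ B / L * A :=
    mul_nonneg (div_nonneg (integral_nonneg hL.le fun _ _ => abs_nonneg _) hL.le)
      (integral_nonneg hL.le fun _ _ => abs_nonneg _)
  linarith [show 4 / L * B * A = 4 * (B / L * A) by ring]
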